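/- For every integer k ≥ 1 and every p ∈ [2, ∞) there exists a constant C > 0 such that for every u ∈ C_c^∞(ℝ, ℂ) the higher-order Gagliardo–Nirenberg inequality holds: ∫_ℝ |u|^p dx ≤ C · (∫_ℝ |u|² dx)^{((2k−1)p+2)/(4k)} · (∫_ℝ |u^{(k)}|² dx + ∫_ℝ |u|² dx)^{(p−2)/(4k)}, where u^{(k)} denotes the k-th derivative of u. -/

import Mathlib

/-!
Write `bⱼ = ∫ ‖u⁽ʲ⁾‖²`. Integrating `(‖u‖²)'` up to `x` gives the Agmon bound
`‖u‖∞⁴ ≤ 4 b₀ b₁`, hence `∫ ‖u‖ᵖ ≤ ‖u‖∞^(p-2) b₀ ≤ 4^((p-2)/4) (b₀ b₁)^((p-2)/4) b₀`.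
Integrating `⟪u⁽ʲ⁾, u⁽ʲ⁺¹⁾⟫'` over `ℝ` and Cauchy–Schwarz give `b_{j+1}² ≤ b_j b_{j+2}`;
this log-convexity yields `b₁ᵏ ≤ b₀^(k-1) b_k`, which trades `b₁` for `b_k` in the bound.
-/

open MeasureTheory
open scoped ContDiff RealInnerProductSpace

theorem HasCompactSupport.integral_deriv_eq_zero {E : Type*} [NormedAddCommGroup E]
    [NormedSpace ℝ E] [CompleteSpace E] {f : ℝ → E} (hf : ContDiff ℝ 1 f)
    (hfs : HasCompactSupport f) : ∫ x, deriv f x = 0 := by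
  have hint : Integrable (deriv f) :=
    (hf.continuous_deriv le_rfl).integrable_of_hasCompactSupport hfs.deriv
  rw [← intervalIntegral.integral_Iic_add_Ioi (b := 0) hint.integrableOn hint.integrableOn,
    hfs.integral_Iic_deriv_eq hf, hfs.integral_Ioi_deriv_eq hf, add_neg_cancel]

theorem HasCompactSupport.iteratedDeriv {E : Type*} [NormedAddCommGroup E] [NormedSpace ℝ E]
    {f : ℝ → E} (hfs : HasCompactSupport f) (n : ℕ) :
    HasCompactSupport (iteratedDeriv n f) := by
  induction n with
  | zero => simpa using hfs
  | succ n ih => simpa only [iteratedDeriv_succ] using ih.deriv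

section Integral

variable {α E : Type*} [MeasurableSpace α] {μ : Measure α} [NormedAddCommGroup E]

theorem sq_integral_norm_mul_norm_le {f g : α → E} (hf : MemLp f 2 μ) (hg : MemLp g 2 μ) :
    (∫ x, ‖f x‖ * ‖g x‖ ∂μ) ^ 2 ≤ (∫ x, ‖f x‖ ^ 2 ∂μ) * ∫ x, ‖g x‖ ^ 2 ∂μ := by
  have hfg := integral_mul_norm_le_Lp_mul_Lq Real.HolderConjugate.two_two
    (by simpa using hf) (by simpa using hg)
  simp only [Real.rpow_two] at hfg
  have hf2 : 0 ≤ ∫ x, ‖f x‖ ^ 2 ∂μ := integral_nonneg fun x => by positivity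
  have hg2 : 0 ≤ ∫ x, ‖g x‖ ^ 2 ∂μ := integral_nonneg fun x => by positivity
  calc (∫ x, ‖f x‖ * ‖g x‖ ∂μ) ^ 2
      ≤ ((∫ x, ‖f x‖ ^ 2 ∂μ) ^ (1 / 2 : ℝ) * (∫ x, ‖g x‖ ^ 2 ∂μ) ^ (1 / 2 : ℝ)) ^ 2 :=
        pow_le_pow_left₀ (integral_nonneg fun x => by positivity) hfg 2
    _ = (∫ x, ‖f x‖ ^ 2 ∂μ) * ∫ x, ‖g x‖ ^ 2 ∂μ := by
        rw [mul_pow, ← Real.rpow_natCast, ← Real.rpow_natCast (_ ^ _), ← Real.rpow_mul hf2,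
          ← Real.rpow_mul hg2]
        norm_num

theorem integral_norm_rpow_le_of_norm_pow_le {f : α → E} {p A : ℝ} {q : ℕ} (hq : 0 < q)
    (hp : 2 ≤ p) (hA : ∀ x, ‖f x‖ ^ q ≤ A) (hf : Integrable (fun x => ‖f x‖ ^ 2) μ) :
    ∫ x, ‖f x‖ ^ p ∂μ ≤ A ^ ((p - 2) / q) * ∫ x, ‖f x‖ ^ 2 ∂μ := by
  rw [← integral_const_mul]
  refine integral_mono_of_nonneg (ae_of_all _ fun x => by positivity) (hf.const_mul _)
    (ae_of_all _ fun x => ?_)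
  have hx := norm_nonneg (f x)
  have hq0 : (q : ℝ) ≠ 0 := by positivity
  calc ‖f x‖ ^ p = (‖f x‖ ^ q) ^ ((p - 2) / q) * ‖f x‖ ^ 2 := by
        rw [← Real.rpow_natCast, ← Real.rpow_mul hx, ← Real.rpow_natCast _ 2,
          ← Real.rpow_add' hx (by rw [mul_div_cancel₀ _ hq0]; push_cast; linarith),
          mul_div_cancel₀ _ hq0]
        ring_nf
    _ ≤ A ^ ((p - 2) / q) * ‖f x‖ ^ 2 := by
        gcongr
        exact hA x

end Integral

section InnerProductSpace

variable {F : Type*} [NormedAddCommGroup F] [InnerProductSpace ℝ F] {f : ℝ → F}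

theorem norm_sq_le_two_mul_integral_norm_mul_norm_deriv (hf : ContDiff ℝ 1 f)
    (hfs : HasCompactSupport f) (x : ℝ) :
    ‖f x‖ ^ 2 ≤ 2 * ∫ t, ‖f t‖ * ‖deriv f t‖ := by
  set g : ℝ → ℝ := fun t => ‖f t‖ ^ 2
  have hg : ContDiff ℝ 1 g := hf.norm_sq ℝ
  have hgs : HasCompactSupport g := hfs.norm.comp_left (g := fun t : ℝ => t ^ 2) (by norm_num)
  have hg' : ∀ t, deriv g t = 2 * ⟪f t, deriv f t⟫ := fun t =>
    ((hf.differentiable one_ne_zero t).hasDerivAt.norm_sq).deriv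
  have hint : Integrable fun t => 2 * (‖f t‖ * ‖deriv f t‖) :=
    ((hf.continuous.norm.mul (hf.continuous_deriv le_rfl).norm).integrable_of_hasCompactSupport
      hfs.norm.mul_right).const_mul 2
  calc ‖f x‖ ^ 2 = ∫ t in Set.Iic x, deriv g t := (hgs.integral_Iic_deriv_eq hg x).symm
    _ ≤ ∫ t in Set.Iic x, 2 * (‖f t‖ * ‖deriv f t‖) := by
        refine integral_mono ((hg.continuous_deriv le_rfl).integrable_of_hasCompactSupport
          hgs.deriv).integrableOn hint.integrableOn fun t => ?_
        rw [hg']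
        gcongr
        exact real_inner_le_norm _ _
    _ ≤ ∫ t, 2 * (‖f t‖ * ‖deriv f t‖) :=
        setIntegral_le_integral hint (ae_of_all _ fun t => by positivity)
    _ = 2 * ∫ t, ‖f t‖ * ‖deriv f t‖ := integral_const_mul 2 _

theorem integral_norm_deriv_sq_le (hf : ContDiff ℝ 2 f) (hfs : HasCompactSupport f) :
    ∫ t, ‖deriv f t‖ ^ 2 ≤ ∫ t, ‖f t‖ * ‖deriv (deriv f) t‖ := by
  have hf' : ContDiff ℝ 1 (deriv f) := hf.deriv'
  set g : ℝ → ℝ := fun t => ⟪f t, deriv f t⟫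
  have hg : ContDiff ℝ 1 g := (hf.of_le one_le_two).inner ℝ hf'
  have hgs : HasCompactSupport g := hfs.mono fun t ht hft => ht (by simp [g, hft])
  have hg' : deriv g = fun t => ‖deriv f t‖ ^ 2 + ⟪f t, deriv (deriv f) t⟫ := by
    ext t
    rw [((hf.differentiable two_ne_zero t).hasDerivAt.inner ℝ
      (hf'.differentiable one_ne_zero t).hasDerivAt).deriv, real_inner_self_eq_norm_sq]
    ring
  have hint₁ : Integrable fun t => ‖deriv f t‖ ^ 2 :=
    (hf'.continuous.memLp_of_hasCompactSupport hfs.deriv).integrable_norm_pow two_ne_zero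
  have hint₂ : Integrable fun t => ⟪f t, deriv (deriv f) t⟫ :=
    (hf.continuous.inner (hf'.continuous_deriv le_rfl)).integrable_of_hasCompactSupport
      (hfs.mono fun t ht hft => ht (by simp [hft]))
  have hzero := hgs.integral_deriv_eq_zero hg
  rw [hg', integral_add hint₁ hint₂] at hzero
  calc ∫ t, ‖deriv f t‖ ^ 2 = ∫ t, -⟪f t, deriv (deriv f) t⟫ := by
        rw [integral_neg]; linarith
    _ ≤ ∫ t, ‖f t‖ * ‖deriv (deriv f) t‖ :=
        integral_mono hint₂.neg ((hf.continuous.norm.mul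
          (hf'.continuous_deriv le_rfl).norm).integrable_of_hasCompactSupport hfs.norm.mul_right)
          fun t => (neg_le_abs _).trans (abs_real_inner_le_norm _ _)

end InnerProductSpace

section LogConvex

variable {b : ℕ → ℝ}

theorem mul_le_mul_succ_of_sq_le_mul (hb : ∀ j, 0 ≤ b j)
    (h : ∀ j, b (j + 1) ^ 2 ≤ b j * b (j + 2)) (j : ℕ) : b 1 * b j ≤ b 0 * b (j + 1) := by
  induction j with
  | zero => rw [mul_comm]
  | succ j ih =>
    rcases (hb (j + 1)).eq_or_lt with hzero | hpos
    · rw [← hzero, mul_zero]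
      exact mul_nonneg (hb 0) (hb _)
    · refine le_of_mul_le_mul_left ?_ hpos
      calc b (j + 1) * (b 1 * b (j + 1)) = b 1 * b (j + 1) ^ 2 := by ring
        _ ≤ b 1 * (b j * b (j + 2)) := mul_le_mul_of_nonneg_left (h j) (hb 1)
        _ = b 1 * b j * b (j + 2) := by ring
        _ ≤ b 0 * b (j + 1) * b (j + 2) := mul_le_mul_of_nonneg_right ih (hb _)
        _ = b (j + 1) * (b 0 * b (j + 1 + 1)) := by ring

theorem pow_succ_le_pow_mul_of_sq_le_mul (hb : ∀ j, 0 ≤ b j)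
    (h : ∀ j, b (j + 1) ^ 2 ≤ b j * b (j + 2)) (n : ℕ) : b 1 ^ (n + 1) ≤ b 0 ^ n * b (n + 1) := by
  induction n with
  | zero => simp
  | succ n ih =>
    calc b 1 ^ (n + 2) = b 1 ^ (n + 1) * b 1 := pow_succ _ _
      _ ≤ b 0 ^ n * b (n + 1) * b 1 := mul_le_mul_of_nonneg_right ih (hb 1)
      _ = b 0 ^ n * (b 1 * b (n + 1)) := by ring
      _ ≤ b 0 ^ n * (b 0 * b (n + 2)) :=
          mul_le_mul_of_nonneg_left (mul_le_mul_succ_of_sq_le_mul hb h _) (pow_nonneg (hb 0) n)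
      _ = b 0 ^ (n + 1) * b (n + 2) := by ring

end LogConvex

theorem rpow_le_rpow_mul_rpow_of_pow_succ_le {x y s e : ℝ} (m : ℕ) (hx : 0 ≤ x) (hy : 0 ≤ y)
    (hs : 0 ≤ s) (he : 0 ≤ e) (h : y ^ (m + 1) ≤ x ^ m * s) :
    y ^ e ≤ x ^ (m * e / (m + 1)) * s ^ (e / (m + 1)) := by
  have hm : (m : ℝ) + 1 ≠ 0 := by positivity
  calc y ^ e = (y ^ (m + 1)) ^ (e / (m + 1)) := by
        rw [← Real.rpow_natCast, ← Real.rpow_mul hy]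
        push_cast
        rw [mul_div_cancel₀ _ hm]
    _ ≤ (x ^ m * s) ^ (e / (m + 1)) := by gcongr
    _ = x ^ (m * e / (m + 1)) * s ^ (e / (m + 1)) := by
        rw [Real.mul_rpow (by positivity) hs, ← Real.rpow_natCast, ← Real.rpow_mul hx,
          mul_div_assoc]

theorem four_mul_mul_rpow_mul_le_of_pow_succ_le {x y s p : ℝ} (m : ℕ) (hx : 0 ≤ x)
    (hy : 0 ≤ y) (hs : 0 ≤ s) (hp : 2 ≤ p) (h : y ^ (m + 1) ≤ x ^ m * s) :
    (4 * (x * y)) ^ ((p - 2) / 4) * x ≤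
      4 ^ ((p - 2) / 4) * x ^ (((2 * ((m + 1 : ℕ) : ℝ) - 1) * p + 2) / (4 * (m + 1 : ℕ))) *
        s ^ ((p - 2) / (4 * (m + 1 : ℕ))) := by
  set e := (p - 2) / 4
  have he : 0 ≤ e := div_nonneg (by linarith) (by norm_num)
  have hme : 0 ≤ m * e / (m + 1) := by positivity
  have hexp₁ : ((2 * ((m + 1 : ℕ) : ℝ) - 1) * p + 2) / (4 * (m + 1 : ℕ)) =
      e + 1 + m * e / (m + 1) := by
    push_cast
    field_simp
    ring
  have hexp₂ : (p - 2) / (4 * (m + 1 : ℕ)) = e / (m + 1) := by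
    push_cast
    rw [div_div]
  rw [hexp₁, hexp₂, Real.rpow_add' hx (by linarith), Real.rpow_add' hx (by linarith),
    Real.rpow_one, Real.mul_rpow (by norm_num) (mul_nonneg hx hy), Real.mul_rpow hx hy]
  calc 4 ^ e * (x ^ e * y ^ e) * x = 4 ^ e * x ^ e * x * y ^ e := by ring
    _ ≤ 4 ^ e * x ^ e * x * (x ^ (m * e / (m + 1)) * s ^ (e / (m + 1))) := by
        gcongr
        exact rpow_le_rpow_mul_rpow_of_pow_succ_le m hx hy hs he h
    _ = 4 ^ e * (x ^ e * x * x ^ (m * e / (m + 1))) * s ^ (e / (m + 1)) := by ring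

section SmoothCompactSupport

variable {F : Type*} [NormedAddCommGroup F] [InnerProductSpace ℝ F] {u : ℝ → F}

theorem norm_pow_four_le_integral_norm_sq_mul_integral_norm_deriv_sq (hu : ContDiff ℝ 1 u)
    (hus : HasCompactSupport u) (x : ℝ) :
    ‖u x‖ ^ 4 ≤ 4 * ((∫ t, ‖u t‖ ^ 2) * ∫ t, ‖deriv u t‖ ^ 2) := by
  calc ‖u x‖ ^ 4 = (‖u x‖ ^ 2) ^ 2 := by ring
    _ ≤ (2 * ∫ t, ‖u t‖ * ‖deriv u t‖) ^ 2 :=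
        pow_le_pow_left₀ (by positivity)
          (norm_sq_le_two_mul_integral_norm_mul_norm_deriv hu hus x) 2
    _ = 4 * (∫ t, ‖u t‖ * ‖deriv u t‖) ^ 2 := by ring
    _ ≤ 4 * ((∫ t, ‖u t‖ ^ 2) * ∫ t, ‖deriv u t‖ ^ 2) := by
        gcongr
        exact sq_integral_norm_mul_norm_le (hu.continuous.memLp_of_hasCompactSupport hus)
          ((hu.continuous_deriv le_rfl).memLp_of_hasCompactSupport hus.deriv)

theorem sq_integral_norm_iteratedDeriv_succ_le (hu : ContDiff ℝ ∞ u)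
    (hus : HasCompactSupport u) (j : ℕ) :
    (∫ x, ‖iteratedDeriv (j + 1) u x‖ ^ 2) ^ 2 ≤
      (∫ x, ‖iteratedDeriv j u x‖ ^ 2) * ∫ x, ‖iteratedDeriv (j + 2) u x‖ ^ 2 := by
  have hf : ContDiff ℝ ∞ (iteratedDeriv j u) := by
    rw [iteratedDeriv_eq_iterate]
    exact hu.iterate_deriv j
  have hfs : HasCompactSupport (iteratedDeriv j u) := hus.iteratedDeriv j
  set f := iteratedDeriv j u
  rw [iteratedDeriv_succ, iteratedDeriv_succ, iteratedDeriv_succ]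
  calc (∫ x, ‖deriv f x‖ ^ 2) ^ 2 ≤ (∫ x, ‖f x‖ * ‖deriv (deriv f) x‖) ^ 2 :=
        pow_le_pow_left₀ (integral_nonneg fun x => by positivity)
          (integral_norm_deriv_sq_le (hf.of_le (WithTop.coe_le_coe.mpr le_top)) hfs) 2
    _ ≤ (∫ x, ‖f x‖ ^ 2) * ∫ x, ‖deriv (deriv f) x‖ ^ 2 :=
        sq_integral_norm_mul_norm_le (hf.continuous.memLp_of_hasCompactSupport hfs)
          ((hf.iterate_deriv 2).continuous.memLp_of_hasCompactSupport hfs.deriv.deriv)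

end SmoothCompactSupport

theorem statement7 (k : ℕ) (hk : 1 ≤ k) (p : ℝ) (hp : 2 ≤ p) :
    ∃ C : ℝ, 0 < C ∧ ∀ u : ℝ → ℂ, ContDiff ℝ (⊤ : ℕ∞) u → HasCompactSupport u →
      (∫ x : ℝ, ‖u x‖ ^ p) ≤
        C * (∫ x : ℝ, ‖u x‖ ^ 2) ^ (((2 * (k : ℝ) - 1) * p + 2) / (4 * k)) *
          ((∫ x : ℝ, ‖iteratedDeriv k u x‖ ^ 2) + ∫ x : ℝ, ‖u x‖ ^ 2) ^
            ((p - 2) / (4 * k)) := by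
  obtain ⟨m, rfl⟩ := Nat.exists_eq_add_of_le' hk
  refine ⟨4 ^ ((p - 2) / 4), by positivity, fun u hu hus => ?_⟩
  set b : ℕ → ℝ := fun j => ∫ x, ‖iteratedDeriv j u x‖ ^ 2
  have hb : ∀ j, 0 ≤ b j := fun j => integral_nonneg fun x => by positivity
  have hb₀ : ∫ x, ‖u x‖ ^ 2 = b 0 := by simp [b]
  have hb₁ : ∫ x, ‖deriv u x‖ ^ 2 = b 1 := by simp [b]
  have hsup : ∀ x, ‖u x‖ ^ 4 ≤ 4 * (b 0 * b 1) := fun x => by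
    simpa only [hb₀, hb₁] using norm_pow_four_le_integral_norm_sq_mul_integral_norm_deriv_sq
      (hu.of_le (WithTop.coe_le_coe.mpr le_top)) hus x
  have hinterp : b 1 ^ (m + 1) ≤ b 0 ^ m * (b (m + 1) + b 0) :=
    (pow_succ_le_pow_mul_of_sq_le_mul hb (sq_integral_norm_iteratedDeriv_succ_le hu hus) m).trans
      (by gcongr; linarith [hb 0])
  have hLp : ∫ x, ‖u x‖ ^ p ≤ (4 * (b 0 * b 1)) ^ ((p - 2) / 4) * b 0 := by
    rw [← hb₀]
    exact integral_norm_rpow_le_of_norm_pow_le (by norm_num) hp hsup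
      ((hu.continuous.memLp_of_hasCompactSupport hus).integrable_norm_pow two_ne_zero)
  rw [hb₀]
  exact hLp.trans (four_mul_mul_rpow_mul_le_of_pow_succ_le m (hb 0) (hb 1)
    (add_nonneg (hb _) (hb 0)) hp hinterp)
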